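/- arXiv:1402.0414 — 6 statements merged into one kernel-verified Lean document; each statement's English description precedes it below -/
import Mathlib

section
/- Let 2 ≤ n ≤ N be integers, let U ⊆ ℂⁿ be an open set containing 0, and let f = (f₁,…,f_N) : U → ℂᴺ be holomorphic (ℂ-analytic) on U. Assume: (i) f_N(z) = 0 for every z ∈ U whose last coordinate vanishes, z_n = 0; (ii) there is a sequence of points p^ν ∈ U with p^ν_n = 0 and p^ν → 0 such that for every ν the complex derivative Df(p^ν) : ℂⁿ → ℂᴺ has rank at most n−1, while its restriction to the hyperplane H = {v ∈ ℂⁿ : v_n = 0} has rank exactly n−1. Then ∂f_N/∂z_n(0) = 0, i.e. the N-th coordinate of Df(0)(e_n) vanishes, where e_n is the n-th standard basis vector of ℂⁿ. -/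
/-!
Since `f_N` vanishes on `H = {z_n = 0}`, every vector `Df(p^ν) v` with `v ∈ H` has vanishing last
coordinate. The rank conditions force `Df(p^ν)(H)` to be the whole range of `Df(p^ν)`, so
`Df(p^ν) e_n` lies in `Df(p^ν)(H)` and its last coordinate vanishes too. Letting `ν → ∞`, the
continuity of `Df` gives the claim at `0`.
-/

open Filter Topology

theorem LinearMap.map_eq_range_of_rank_le_rank_domRestrict {K V W : Type*} [DivisionRing K]
    [AddCommGroup V] [Module K V] [AddCommGroup W] [Module K W] (L : V →ₗ[K] W)
    (H : Submodule K V) {r : ℕ} (hL : L.rank ≤ r) (hH : (L.domRestrict H).rank = r) :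
    H.map L = L.range := by
  rw [← LinearMap.range_domRestrict]
  have : FiniteDimensional K L.range :=
    Module.rank_lt_aleph0_iff.mp (hL.trans_lt Cardinal.natCast_lt_aleph0)
  refine Submodule.eq_of_le_of_finrank_le (LinearMap.range_domRestrict H L ▸ map_le_range) ?_
  rw [Module.finrank_eq_of_rank_eq hH]
  exact Module.finrank_le_of_rank_le hL

section

variable {𝕜 E F : Type*} [NontriviallyNormedField 𝕜] [NormedAddCommGroup E] [NormedSpace 𝕜 E]
  [NormedAddCommGroup F] [NormedSpace 𝕜 F] {g : E → F} {L : E →L[𝕜] F} {x v : E}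

theorem HasFDerivAt.apply_eq_zero_of_eventually_eq_zero_on_line (hg : HasFDerivAt g L x)
    (h : ∀ᶠ t : 𝕜 in 𝓝 0, g (x + t • v) = 0) : L v = 0 := by
  have hline : HasDerivAt (fun t : 𝕜 => g (x + t • v)) (L v) 0 := hg.hasLineDerivAt v
  exact (hline.congr_of_eventuallyEq (h.mono fun _ ht => ht.symm)).unique (hasDerivAt_const 0 0)

theorem HasFDerivAt.apply_eq_zero_of_eq_zero_on_affine {U : Set E} {H : Submodule 𝕜 E}
    (hg : HasFDerivAt g L x) (hU : U ∈ 𝓝 x) (hzero : ∀ z ∈ U, z - x ∈ H → g z = 0)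
    (hv : v ∈ H) : L v = 0 := by
  refine hg.apply_eq_zero_of_eventually_eq_zero_on_line ?_
  have hline : Tendsto (fun t : 𝕜 => x + t • v) (𝓝 0) (𝓝 x) :=
    (by fun_prop : Continuous fun t : 𝕜 => x + t • v).tendsto' 0 x (by simp)
  filter_upwards [hline hU] with t ht
  exact hzero _ ht (by simpa using H.smul_mem t hv)

end

/-- Key computation (e.der0) in the proof of Theorem 1: if `f` is holomorphic near `0`,
`f_N` vanishes on the hyperplane `{z_n = 0}`, and along a sequence `p^ν → 0` in this
hyperplane the full derivative has rank `≤ n-1` while its restriction to the hyperplane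
has rank exactly `n-1`, then `∂f_N/∂z_n(0) = 0`. -/
theorem stmt0 (n N : ℕ) (hn : 2 ≤ n) (hnN : n ≤ N)
    (U : Set (Fin n → ℂ)) (hU : IsOpen U) (h0U : (0 : Fin n → ℂ) ∈ U)
    (f : (Fin n → ℂ) → (Fin N → ℂ)) (hf : AnalyticOnNhd ℂ f U)
    (hvanish : ∀ z ∈ U, z ⟨n - 1, by omega⟩ = 0 → f z ⟨N - 1, by omega⟩ = 0)
    (p : ℕ → (Fin n → ℂ)) (hpU : ∀ ν, p ν ∈ U)
    (hpH : ∀ ν, p ν ⟨n - 1, by omega⟩ = 0)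
    (hplim : Filter.Tendsto p Filter.atTop (nhds 0))
    (hrank : ∀ ν, LinearMap.rank (fderiv ℂ f (p ν)).toLinearMap ≤ (n - 1 : ℕ))
    (hrankH : ∀ ν,
      LinearMap.rank ((fderiv ℂ f (p ν)).toLinearMap.domRestrict
        (LinearMap.ker (LinearMap.proj (R := ℂ) (φ := fun _ : Fin n => ℂ)
          ⟨n - 1, by omega⟩))) = (n - 1 : ℕ)) :
    fderiv ℂ f 0 (Pi.single ⟨n - 1, by omega⟩ 1) ⟨N - 1, by omega⟩ = 0 := by
  set iN : Fin N := ⟨N - 1, by omega⟩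
  set e : Fin n → ℂ := Pi.single ⟨n - 1, by omega⟩ 1
  set H := LinearMap.ker (LinearMap.proj (R := ℂ) (φ := fun _ : Fin n => ℂ) ⟨n - 1, by omega⟩)
  have hH : ∀ ν, ∀ v ∈ H, fderiv ℂ f (p ν) v iN = 0 := by
    intro ν v hv
    exact HasFDerivAt.apply_eq_zero_of_eq_zero_on_affine
      (hasFDerivAt_pi'.mp (hf _ (hpU ν)).differentiableAt.hasFDerivAt iN) (hU.mem_nhds (hpU ν))
      (fun z hz hzH => hvanish z hz (by simpa [H, hpH ν] using hzH)) hv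
  have he : ∀ ν, fderiv ℂ f (p ν) e iN = 0 := by
    intro ν
    obtain ⟨w, hwH, hw⟩ : (fderiv ℂ f (p ν)).toLinearMap e ∈ H.map _ := by
      rw [LinearMap.map_eq_range_of_rank_le_rank_domRestrict _ H (hrank ν) (hrankH ν)]
      exact LinearMap.mem_range_self _ _
    exact (congrFun hw iN).symm.trans (hH ν w hwH)
  have hlim : Tendsto (fun ν => fderiv ℂ f (p ν)) atTop (𝓝 (fderiv ℂ f 0)) :=
    (hf.fderiv 0 h0U).continuousAt.tendsto.comp hplim
  have heval : Continuous fun T : (Fin n → ℂ) →L[ℂ] (Fin N → ℂ) => T e iN := by fun_prop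
  exact (isClosed_eq heval continuous_const).mem_of_tendsto hlim (.of_forall he)
end

section
/- Let E be a finite-dimensional real normed vector space, F a real normed vector space, π : E → F a continuous linear map, and A ⊆ E a set such that the positive tangent cone to A at 0 intersects ker π only in the zero vector. Then there exist constants c > 0 and ε > 0 such that ‖z‖ ≤ c·‖π(z)‖ for every z ∈ A with ‖z‖ < ε. -/
/-!
If no such constants existed, there would be points `zₙ ∈ A \ {0}` with `zₙ → 0` and
`‖π zₙ‖ = o(‖zₙ‖)`. By compactness of the unit sphere the directions `zₙ / ‖zₙ‖` accumulate at a
unit vector `w`; rescaling by `‖zₙ‖⁻¹ → ∞` puts `w` in the positive tangent cone, and `π w = 0`.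
-/

open Filter Topology Metric

section NormalizedSequences

variable {E : Type*} [NormedAddCommGroup E] [NormedSpace ℝ E]

theorem mem_posTangentConeAt_of_tendsto_normalize {α : Type*} {l : Filter α} [l.NeBot]
    {A : Set E} {x w : E} {z : α → E} (hzA : ∀ n, x + z n ∈ A) (hz : Tendsto z l (𝓝 0))
    (hw : Tendsto (fun n ↦ ‖z n‖⁻¹ • z n) l (𝓝 w)) : w ∈ posTangentConeAt A x :=
  mem_tangentConeAt_of_seq l (fun n ↦ ‖z n‖₊⁻¹) z hz (.of_forall hzA)
    (by simpa [NNReal.smul_def] using hw)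

theorem exists_tendsto_normalize_comp_strictMono [FiniteDimensional ℝ E] {z : ℕ → E}
    (hz : ∀ n, z n ≠ 0) :
    ∃ w ∈ sphere (0 : E) 1, ∃ φ : ℕ → ℕ, StrictMono φ ∧
      Tendsto (fun n ↦ ‖z (φ n)‖⁻¹ • z (φ n)) atTop (𝓝 w) :=
  (isCompact_sphere (0 : E) 1).tendsto_subseq (x := fun n ↦ ‖z n‖⁻¹ • z n) fun n ↦ by
    simpa using norm_smul_inv_norm (𝕜 := ℝ) (hz n)

theorem exists_ne_zero_mem_posTangentConeAt_of_tendsto_map_normalize [FiniteDimensional ℝ E]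
    {F : Type*} [NormedAddCommGroup F] [NormedSpace ℝ F] (π : E →L[ℝ] F) {A : Set E}
    {z : ℕ → E} (hzA : ∀ n, z n ∈ A) (hz_ne : ∀ n, z n ≠ 0) (hz : Tendsto z atTop (𝓝 0))
    (hπz : Tendsto (fun n ↦ π (‖z n‖⁻¹ • z n)) atTop (𝓝 0)) :
    ∃ w ∈ posTangentConeAt A 0, π w = 0 ∧ w ≠ 0 := by
  obtain ⟨w, hw_sphere, φ, hφ, hw⟩ := exists_tendsto_normalize_comp_strictMono hz_ne
  refine ⟨w, ?_, ?_, ne_zero_of_mem_unit_sphere ⟨w, hw_sphere⟩⟩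
  · exact mem_posTangentConeAt_of_tendsto_normalize (by simpa using fun n ↦ hzA (φ n))
      (hz.comp hφ.tendsto_atTop) hw
  · exact tendsto_nhds_unique ((π.continuous.tendsto w).comp hw) (hπz.comp hφ.tendsto_atTop)

end NormalizedSequences

/-- The estimate (e.5), valid on the tangent cone `C₀(A)`, passes to points of `A` near the
origin: if the positive tangent cone of `A` at `0` meets `ker π` only in `0`, then
`‖z‖ ≤ c‖π z‖` for all `z ∈ A` close enough to `0`. -/
theorem stmt7 (E F : Type*) [NormedAddCommGroup E] [NormedSpace ℝ E]
    [FiniteDimensional ℝ E] [NormedAddCommGroup F] [NormedSpace ℝ F]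
    (π : E →L[ℝ] F) (A : Set E)
    (hker : posTangentConeAt A 0 ∩ {z : E | π z = 0} ⊆ {0}) :
    ∃ c > (0 : ℝ), ∃ ε > (0 : ℝ), ∀ z ∈ A, ‖z‖ < ε → ‖z‖ ≤ c * ‖π z‖ := by
  by_contra! h
  choose z hzA hz_small hz_ratio using fun n : ℕ ↦
    h (n + 1) n.cast_add_one_pos (1 / (n + 1)) Nat.one_div_pos_of_nat
  have hz_pos n : 0 < ‖z n‖ := (mul_nonneg n.cast_add_one_pos.le (norm_nonneg _)).trans_lt
    (hz_ratio n)
  have hπz_le n : ‖π (‖z n‖⁻¹ • z n)‖ ≤ 1 / (n + 1) := by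
    rw [π.map_smul, norm_smul, norm_inv, norm_norm, inv_mul_le_iff₀ (hz_pos n),
      mul_one_div, le_div_iff₀ n.cast_add_one_pos]
    linarith [hz_ratio n]
  obtain ⟨w, hw, hπw, hw0⟩ := exists_ne_zero_mem_posTangentConeAt_of_tendsto_map_normalize π hzA
    (fun n ↦ norm_pos_iff.mp (hz_pos n))
    (squeeze_zero_norm (fun n ↦ (hz_small n).le) tendsto_one_div_add_atTop_nhds_zero_nat)
    (squeeze_zero_norm hπz_le tendsto_one_div_add_atTop_nhds_zero_nat)
  exact hw0 (hker ⟨hw, hπw⟩)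
end

section
/- Let E be a finite-dimensional real normed vector space, σ ⊆ E a set, and K ⊆ E a closed cone such that K intersects the positive tangent cone to σ at 0 only in the zero vector. Then there exists ε > 0 such that every z ∈ σ ∩ K with ‖z‖ < ε equals 0; in other words, the origin is (at worst) an isolated point of σ ∩ K. -/
/-!
Rescaling a sequence of nonzero points of `σ ∩ K` tending to `0` onto the unit sphere and
extracting a convergent subsequence (the sphere is compact in finite dimension) produces a unit
vector of the positive tangent cone of `σ ∩ K` at `0`. This vector lies in the tangent cone of
`σ`, and also in `K` because `K` is a closed cone, contradicting the hypothesis.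
-/

open Filter Topology Metric Set

theorem IsClosed.posTangentConeAt_zero_subset {E : Type*} [AddCommGroup E] [Module ℝ E]
    [TopologicalSpace E] {K : Set E} (hK : IsClosed K)
    (hcone : ∀ t : ℝ, 0 ≤ t → ∀ v ∈ K, t • v ∈ K) :
    posTangentConeAt K 0 ⊆ K := by
  intro y hy
  obtain ⟨α, l, hl, c, d, -, hdK, hcd⟩ := exists_fun_of_mem_tangentConeAt hy
  exact hK.mem_of_tendsto hcd <| hdK.mono fun n hn ↦ hcone (c n) (c n).2 _ (by simpa using hn)

theorem exists_ne_zero_mem_posTangentConeAt_of_accPt {E : Type*} [NormedAddCommGroup E]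
    [NormedSpace ℝ E] [ProperSpace E] {s : Set E} {x : E} (hx : AccPt x (𝓟 s)) :
    ∃ v ∈ posTangentConeAt s x, v ≠ 0 := by
  obtain ⟨y, hyx, hy⟩ := exists_seq_forall_of_frequently (accPt_iff_frequently.1 hx)
  set d : ℕ → E := fun n ↦ y n - x
  have hd : ∀ n, d n ≠ 0 := fun n ↦ sub_ne_zero.2 (hy n).1
  have hsphere : ∀ n, ‖d n‖⁻¹ • d n ∈ sphere (0 : E) 1 := fun n ↦ by
    simp [norm_smul, hd n]
  obtain ⟨v, hv, φ, hφ, hlim⟩ := (isCompact_sphere (0 : E) 1).tendsto_subseq hsphere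
  refine ⟨v, mem_tangentConeAt_of_seq atTop (fun n ↦ ‖d (φ n)‖₊⁻¹) (d ∘ φ) ?_ ?_ ?_,
    ne_of_mem_sphere hv one_ne_zero⟩
  · exact (tendsto_sub_nhds_zero_iff.2 hyx).comp hφ.tendsto_atTop
  · exact .of_forall fun n ↦ by simpa [d] using (hy (φ n)).2
  · simpa [NNReal.smul_def, Function.comp_def] using hlim

theorem stmt8_general (E : Type*) [NormedAddCommGroup E] [NormedSpace ℝ E]
    [FiniteDimensional ℝ E] (σ K : Set E)
    (hclosed : IsClosed K)
    (hcone : ∀ t : ℝ, 0 ≤ t → ∀ v ∈ K, t • v ∈ K)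
    (hK : K ∩ posTangentConeAt σ 0 ⊆ {0}) :
    ∃ ε > (0 : ℝ), ∀ z ∈ σ ∩ K, ‖z‖ < ε → z = 0 := by
  have hacc : ¬AccPt (0 : E) (𝓟 (σ ∩ K)) := by
    intro hacc
    obtain ⟨v, hv, hv0⟩ := exists_ne_zero_mem_posTangentConeAt_of_accPt hacc
    have hvK : v ∈ K :=
      hclosed.posTangentConeAt_zero_subset hcone (posTangentConeAt_mono inter_subset_right hv)
    exact hv0 (hK ⟨hvK, posTangentConeAt_mono inter_subset_left hv⟩)
  rw [accPt_iff_frequently, not_frequently] at hacc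
  obtain ⟨ε, hε, hball⟩ := Metric.eventually_nhds_iff.1 hacc
  exact ⟨ε, hε, fun z hz hzε ↦ not_not.1 fun hz0 ↦ hball (by simpa using hzε) ⟨hz0, hz⟩⟩

/-- If a closed cone `K` meets the positive tangent cone of `σ` at `0` only in the zero
vector, then the origin is (at worst) an isolated point of `σ ∩ K`. -/
theorem stmt8 (E : Type*) [NormedAddCommGroup E] [NormedSpace ℝ E]
    [FiniteDimensional ℝ E] (σ K : Set E)
    (hclosed : IsClosed K) (h0 : (0 : E) ∈ K)
    (hcone : ∀ t : ℝ, 0 ≤ t → ∀ v ∈ K, t • v ∈ K)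
    (hK : K ∩ posTangentConeAt σ 0 ⊆ {0}) :
    ∃ ε > (0 : ℝ), ∀ z ∈ σ ∩ K, ‖z‖ < ε → z = 0 :=
  stmt8_general E σ K hclosed hcone hK
end

section
/- Let E be a finite-dimensional real normed vector space, σ ⊆ E a set, and K ⊆ E a closed cone such that K intersects the positive tangent cone to σ at 0 only in the zero vector. Then there exist constants c > 0 and ε > 0 such that ‖x − s‖ ≥ c·‖x‖ whenever x ∈ K and s ∈ σ satisfy ‖x‖ < ε and ‖s‖ < ε. -/
open Filter Topology

/-!
Argue by contradiction: if the estimate fails, there are `xₙ ∈ K` and `sₙ ∈ σ` tending to `0`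
with `‖xₙ - sₙ‖ = o(‖xₙ‖)`. By compactness of the unit sphere, a subsequence of the unit
vectors `xₙ / ‖xₙ‖ ∈ K` converges to a unit vector `v ∈ K`, and `sₙ / ‖xₙ‖` converges to the
same `v`, so `v` is a nonzero vector of `K` lying in the tangent cone of `σ` at `0`.
-/

section TangentCone

variable {E : Type*} [NormedAddCommGroup E] [NormedSpace ℝ E]

theorem mem_posTangentConeAt_zero_of_tendsto {α : Type*} {l : Filter α} [l.NeBot] {σ : Set E}
    {c : α → ℝ} {x s : α → E} {v : E} (hc : ∀ n, 0 ≤ c n) (hs : Tendsto s l (𝓝 0))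
    (hsσ : ∀ᶠ n in l, s n ∈ σ) (hx : Tendsto (fun n ↦ c n • x n) l (𝓝 v))
    (hxs : Tendsto (fun n ↦ c n • (x n - s n)) l (𝓝 0)) :
    v ∈ posTangentConeAt σ 0 := by
  refine mem_tangentConeAt_of_seq l (fun n ↦ (c n).toNNReal) s hs (by simpa using hsσ) ?_
  have hlim := hx.sub hxs
  simp only [sub_zero, smul_sub, sub_sub_cancel] at hlim
  simpa [NNReal.smul_def, Real.coe_toNNReal _ (hc _)] using hlim

theorem exists_norm_eq_one_mem_inter_posTangentConeAt [FiniteDimensional ℝ E] {σ K : Set E}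
    (hclosed : IsClosed K) (hcone : ∀ t : ℝ, 0 ≤ t → ∀ v ∈ K, t • v ∈ K) {x s : ℕ → E}
    (hxK : ∀ n, x n ∈ K) (hsσ : ∀ n, s n ∈ σ) (hx0 : ∀ n, x n ≠ 0)
    (hs : Tendsto s atTop (𝓝 0))
    (hxs : Tendsto (fun n ↦ ‖x n‖⁻¹ • (x n - s n)) atTop (𝓝 0)) :
    ∃ v ∈ K ∩ posTangentConeAt σ 0, ‖v‖ = 1 := by
  have hunit : ∀ n, ‖x n‖⁻¹ • x n ∈ K ∩ Metric.sphere 0 1 := fun n ↦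
    ⟨hcone _ (by positivity) _ (hxK n), by simp [norm_smul, hx0 n]⟩
  obtain ⟨v, ⟨hvK, hv⟩, φ, hφ, hlim⟩ :=
    ((isCompact_sphere (0 : E) 1).inter_left hclosed).tendsto_subseq hunit
  refine ⟨v, ⟨hvK, ?_⟩, by simpa using hv⟩
  exact mem_posTangentConeAt_zero_of_tendsto (fun _ ↦ by positivity)
    (hs.comp hφ.tendsto_atTop) (.of_forall fun _ ↦ hsσ _) hlim (hxs.comp hφ.tendsto_atTop)

end TangentCone

theorem stmt10_general (E : Type*) [NormedAddCommGroup E] [NormedSpace ℝ E]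
    [FiniteDimensional ℝ E] (σ K : Set E)
    (hclosed : IsClosed K)
    (hcone : ∀ t : ℝ, 0 ≤ t → ∀ v ∈ K, t • v ∈ K)
    (hK : K ∩ posTangentConeAt σ 0 ⊆ {0}) :
    ∃ c > (0 : ℝ), ∃ ε > (0 : ℝ), ∀ x ∈ K, ∀ s ∈ σ,
      ‖x‖ < ε → ‖s‖ < ε → c * ‖x‖ ≤ ‖x - s‖ := by
  by_contra! hcon
  choose x hxK s hsσ _ hs hxs using fun n : ℕ ↦
    hcon _ Nat.one_div_pos_of_nat _ Nat.one_div_pos_of_nat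
  have hx0 : ∀ n, x n ≠ 0 := fun n h ↦ by
    simpa [h] using (norm_nonneg _).trans_lt (hxs n)
  have hrel : ∀ n, ‖‖x n‖⁻¹ • (x n - s n)‖ ≤ 1 / ((n : ℝ) + 1) := fun n ↦ by
    rw [norm_smul, norm_inv, norm_norm, inv_mul_le_iff₀ (norm_pos_iff.2 (hx0 n)), mul_comm]
    exact (hxs n).le
  obtain ⟨v, hv, hv1⟩ := exists_norm_eq_one_mem_inter_posTangentConeAt hclosed hcone hxK hsσ hx0
    (squeeze_zero_norm (fun n ↦ (hs n).le) tendsto_one_div_add_atTop_nhds_zero_nat)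
    (squeeze_zero_norm hrel tendsto_one_div_add_atTop_nhds_zero_nat)
  simp [Set.mem_singleton_iff.1 (hK hv)] at hv1

/-- If a closed cone `K` meets the positive tangent cone of `σ` at `0` only in the zero
vector, then near the origin `‖x - s‖ ≥ c‖x‖` for `x ∈ K` and `s ∈ σ` (the estimate
`dist(p̃, σ̃) ≥ c₃|p₁|` in Lemma 1). -/
theorem stmt10 (E : Type*) [NormedAddCommGroup E] [NormedSpace ℝ E]
    [FiniteDimensional ℝ E] (σ K : Set E)
    (hclosed : IsClosed K) (h0 : (0 : E) ∈ K)
    (hcone : ∀ t : ℝ, 0 ≤ t → ∀ v ∈ K, t • v ∈ K)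
    (hK : K ∩ posTangentConeAt σ 0 ⊆ {0}) :
    ∃ c > (0 : ℝ), ∃ ε > (0 : ℝ), ∀ x ∈ K, ∀ s ∈ σ,
      ‖x‖ < ε → ‖s‖ < ε → c * ‖x‖ ≤ ‖x - s‖ :=
  stmt10_general E σ K hclosed hcone hK
end

section
/- Let E be a finite-dimensional real normed vector space, F a real normed vector space, π : E → F a continuous linear map, and A ⊆ E a set such that the positive tangent cone to A at 0 is contained in ker π. Then π(z) = o(‖z‖) as z → 0 along A: for every ε > 0 there exists δ > 0 such that ‖π(z)‖ ≤ ε·‖z‖ for every z ∈ A with ‖z‖ < δ. -/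
/-!
Suppose `‖π z‖ > c‖z‖` for points `z ∈ A` arbitrarily close to `0`. Their normalizations
`z / ‖z‖` lie in the compact set `{w | ‖w‖ ≤ 1, c ≤ ‖π w‖}`, so they have a cluster point `v`
there. Every cluster point of `z / ‖z‖` as `z → 0` within `A` is a tangent direction of `A`
at `0`, so `π v = 0`, contradicting `c ≤ ‖π v‖`.
-/

open Filter Topology Metric

theorem mem_posTangentConeAt_of_mapClusterPt {E : Type*} [NormedAddCommGroup E]
    [NormedSpace ℝ E] {A : Set E} {v : E}
    (hv : MapClusterPt v (𝓝[A] 0) fun z ↦ ‖z‖⁻¹ • z) : v ∈ posTangentConeAt A 0 := by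
  have : (comap (fun z ↦ ‖z‖⁻¹ • z) (𝓝 v) ⊓ 𝓝[A] 0).NeBot :=
    neBot_inf_comap_iff_map'.mpr hv
  refine mem_tangentConeAt_of_seq (comap (fun z ↦ ‖z‖⁻¹ • z) (𝓝 v) ⊓ 𝓝[A] 0)
    (fun z ↦ ‖z‖₊⁻¹) id ?_ ?_ ?_
  · exact tendsto_id.mono_left (inf_le_right.trans nhdsWithin_le_nhds)
  · simpa using inf_le_right (a := comap _ (𝓝 v)) self_mem_nhdsWithin
  · simpa [NNReal.smul_def] using tendsto_comap.mono_left inf_le_left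

theorem isLittleO_nhdsWithin_of_posTangentConeAt_subset_ker {E F : Type*}
    [NormedAddCommGroup E] [NormedSpace ℝ E] [FiniteDimensional ℝ E] [NormedAddCommGroup F]
    [NormedSpace ℝ F] (π : E →L[ℝ] F) {A : Set E}
    (hker : posTangentConeAt A 0 ⊆ {z : E | π z = 0}) :
    (π : E → F) =o[𝓝[A] 0] id := by
  refine Asymptotics.IsLittleO.of_bound fun c hc ↦ ?_
  by_contra h
  have hK : IsCompact (closedBall (0 : E) 1 ∩ {w | c ≤ ‖π w‖}) :=
    (isCompact_closedBall 0 1).inter_right (isClosed_le continuous_const π.continuous.norm)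
  obtain ⟨v, ⟨-, hcv⟩, hv⟩ := hK.exists_mapClusterPt_of_frequently (f := fun z ↦ ‖z‖⁻¹ • z) <| by
    refine (not_eventually.mp h).mono fun z hz ↦ ⟨inv_norm_smul_mem_unitClosedBall z, ?_⟩
    rw [not_le, id] at hz
    have hz₀ : 0 < ‖z‖ := norm_pos_iff.mpr <| by rintro rfl; simp at hz
    rw [Set.mem_ofPred_eq, map_smul, norm_smul, norm_inv, norm_norm, ← div_eq_inv_mul,
      le_div_iff₀ hz₀]
    exact hz.le
  have hπv : π v = 0 := hker (mem_posTangentConeAt_of_mapClusterPt hv)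
  simp only [Set.mem_ofPred_eq, hπv, norm_zero] at hcv
  linarith

/-- Estimate (e.four) of Lemma 1: if the positive tangent cone of `A` at `0` lies in
`ker π`, then `π(z) = o(‖z‖)` as `z → 0` along `A`. -/
theorem stmt11 (E F : Type*) [NormedAddCommGroup E] [NormedSpace ℝ E]
    [FiniteDimensional ℝ E] [NormedAddCommGroup F] [NormedSpace ℝ F]
    (π : E →L[ℝ] F) (A : Set E)
    (hker : posTangentConeAt A 0 ⊆ {z : E | π z = 0}) :
    ∀ ε > (0 : ℝ), ∃ δ > (0 : ℝ), ∀ z ∈ A, ‖z‖ < δ → ‖π z‖ ≤ ε * ‖z‖ := by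
  intro ε hε
  have h := (isLittleO_nhdsWithin_of_posTangentConeAt_subset_ker π hker).def hε
  obtain ⟨δ, hδ, hball⟩ := Metric.eventually_nhds_iff.mp (eventually_nhdsWithin_iff.mp h)
  exact ⟨δ, hδ, fun z hzA hz ↦ hball (by simpa using hz) hzA⟩
end

section
/- Let d ≥ 1, let V ⊆ ℂ^d be an open set, and let c > 0 be a constant such that for every p ∈ V the open ball of radius c·‖p‖ centered at p is contained in V. Let h : V → ℂ be holomorphic (ℂ-differentiable at every point of V) and suppose that h(z) = o(‖z‖) as z → 0 along V, i.e. for every ε > 0 there is δ > 0 with |h(z)| ≤ ε‖z‖ for all z ∈ V with ‖z‖ < δ. Then the derivative of h tends to 0 at the origin along V: ‖Dh(p)‖ → 0 as p → 0 with p ∈ V; in particular all partial derivatives ∂h/∂z_k(p) tend to 0. -/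
/-!
Near a point `p ≠ 0` of `V`, the ball `B(p, c‖p‖)` lies in `V` and in `B(0, (1 + c)‖p‖)`, so
`h = o(‖z‖)` bounds `|h|` on it by `ε (1 + c)‖p‖`. The Cauchy (Schwarz) estimate on that ball
then gives `‖Dh(p)‖ ≤ 2ε (1 + c) / c`: the factor `‖p‖` cancels between the bound and the
radius. At `p = 0` (if `0 ∈ V`) the hypothesis `h = o(‖z‖)` says directly that `Dh(0) = 0`.
-/

open Filter Topology Metric

section NormedSpace

variable {E F : Type*} [NormedAddCommGroup E] [NormedSpace ℂ E]
  [NormedAddCommGroup F] [NormedSpace ℂ F]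

theorem norm_fderiv_le_of_forall_mem_ball_norm_le {f : E → F} {p : E} {r M : ℝ}
    (hf : DifferentiableOn ℂ f (ball p r)) (hr : 0 < r) (hM : ∀ z ∈ ball p r, ‖f z‖ ≤ M) :
    ‖fderiv ℂ f p‖ ≤ 2 * M / r := by
  refine Complex.norm_fderiv_le_div_of_mapsTo_ball hf (fun z hz => ?_) hr
  rw [mem_closedBall, dist_eq_norm]
  calc ‖f z - f p‖ ≤ ‖f z‖ + ‖f p‖ := norm_sub_le _ _
    _ ≤ 2 * M := by linarith [hM z hz, hM p (mem_ball_self hr)]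

theorem norm_fderiv_le_of_forall_mem_ball_norm_le_mul_norm {f : E → F} {p : E} {c ε : ℝ}
    (hc : 0 < c) (hp : p ≠ 0) (hf : DifferentiableOn ℂ f (ball p (c * ‖p‖))) (hε : 0 ≤ ε)
    (hfε : ∀ z ∈ ball p (c * ‖p‖), ‖f z‖ ≤ ε * ‖z‖) :
    ‖fderiv ℂ f p‖ ≤ 2 * ε * (1 + c) / c := by
  have hp' : 0 < ‖p‖ := norm_pos_iff.2 hp
  have hM : ∀ z ∈ ball p (c * ‖p‖), ‖f z‖ ≤ ε * ((1 + c) * ‖p‖) := fun z hz =>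
    (hfε z hz).trans <| mul_le_mul_of_nonneg_left (by linarith [norm_lt_of_mem_ball hz]) hε
  calc ‖fderiv ℂ f p‖ ≤ 2 * (ε * ((1 + c) * ‖p‖)) / (c * ‖p‖) :=
        norm_fderiv_le_of_forall_mem_ball_norm_le hf (by positivity) hM
    _ = 2 * ε * (1 + c) / c := by field_simp

theorem hasFDerivAt_zero_of_forall_norm_le_mul_norm {f : E → F} {V : Set E} (hV : V ∈ 𝓝 0) (hf : ∀ ε > (0 : ℝ), ∃ δ > (0 : ℝ), ∀ z ∈ V, ‖z‖ < δ → ‖f z‖ ≤ ε * ‖z‖) :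
    HasFDerivAt f (0 : E →L[ℂ] F) 0 := by
  have hf0 : f 0 = 0 := by
    obtain ⟨δ, hδ, hδf⟩ := hf 1 one_pos
    simpa using hδf 0 (mem_of_mem_nhds hV) (by simpa using hδ)
  rw [hasFDerivAt_iff_isLittleO_nhds_zero, Asymptotics.isLittleO_iff]
  intro ε hε
  obtain ⟨δ, hδ, hδf⟩ := hf ε hε
  filter_upwards [hV, ball_mem_nhds 0 hδ] with z hzV hzδ
  simpa [hf0] using hδf z hzV (mem_ball_zero_iff.1 hzδ)

end NormedSpace

theorem stmt12_general (d : ℕ) (V : Set (Fin d → ℂ)) (hV : IsOpen V)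
    (c : ℝ) (hc : 0 < c) (hball : ∀ p ∈ V, Metric.ball p (c * ‖p‖) ⊆ V)
    (h : (Fin d → ℂ) → ℂ) (hh : ∀ p ∈ V, DifferentiableAt ℂ h p)
    (hsmall : ∀ ε > (0 : ℝ), ∃ δ > (0 : ℝ), ∀ z ∈ V, ‖z‖ < δ → ‖h z‖ ≤ ε * ‖z‖) :
    Filter.Tendsto (fun p => ‖fderiv ℂ h p‖) (𝓝[V] 0) (𝓝 0) := by
  rw [Metric.tendsto_nhdsWithin_nhds]
  intro ε hε
  obtain ⟨δ, hδ, hδh⟩ := hsmall (ε * c / (4 * (1 + c))) (by positivity)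
  refine ⟨δ / (1 + c), by positivity, fun p hp hpδ => ?_⟩
  rw [dist_zero_right] at hpδ
  rw [Real.dist_eq, sub_zero, abs_norm]
  rcases eq_or_ne p 0 with rfl | hp0
  · simpa [(hasFDerivAt_zero_of_forall_norm_le_mul_norm (hV.mem_nhds hp) hsmall).fderiv]
  · have hδ' : (1 + c) * ‖p‖ < δ := by rwa [lt_div_iff₀' (by positivity)] at hpδ
    calc ‖fderiv ℂ h p‖ ≤ 2 * (ε * c / (4 * (1 + c))) * (1 + c) / c :=
          norm_fderiv_le_of_forall_mem_ball_norm_le_mul_norm hc hp0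
            (fun z hz => (hh z (hball p hp hz)).differentiableWithinAt) (by positivity)
            fun z hz => hδh z (hball p hp hz) (by linarith [norm_lt_of_mem_ball hz])
      _ = ε / 2 := by field_simp; ring
      _ < ε := half_lt_self hε

/-- Step (e.eight) of Lemma 1, via the Schwarz/Cauchy estimate: if `V` contains a ball of
radius `c‖p‖` around each of its points `p`, `h` is holomorphic on `V`, and `h(z) = o(‖z‖)`
as `z → 0` along `V`, then `‖Dh(p)‖ → 0` as `p → 0` along `V`. -/
theorem stmt12 (d : ℕ) (hd : 1 ≤ d) (V : Set (Fin d → ℂ)) (hV : IsOpen V)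
    (c : ℝ) (hc : 0 < c) (hball : ∀ p ∈ V, Metric.ball p (c * ‖p‖) ⊆ V)
    (h : (Fin d → ℂ) → ℂ) (hh : ∀ p ∈ V, DifferentiableAt ℂ h p)
    (hsmall : ∀ ε > (0 : ℝ), ∃ δ > (0 : ℝ), ∀ z ∈ V, ‖z‖ < δ → ‖h z‖ ≤ ε * ‖z‖) :
    Filter.Tendsto (fun p => ‖fderiv ℂ h p‖) (𝓝[V] 0) (𝓝 0) :=
  stmt12_general d V hV c hc hball h hh hsmall
end
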